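/- For every graph G, the open packing number of the subdivision graph S(G) equals α(G) + α'(G), where α(G) is the independence number of G and α'(G) is the matching number of G. -/

import Mathlib

variable {V : Type*}

/-- A set of vertices is an open packing if the open neighborhoods of distinct
vertices in it are pairwise disjoint. -/
def IsOpenPacking (G : SimpleGraph V) (S : Set V) : Prop :=
  S.Pairwise fun u v => Disjoint (G.neighborSet u) (G.neighborSet v)

/-- The open packing number: the maximum cardinality of an open packing. -/
noncomputable def openPackingNumber (G : SimpleGraph V) : ℕ :=
  sSup {n | ∃ S : Finset V, IsOpenPacking G ↑S ∧ S.card = n}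

/-- `U` is the unique maximum open packing of `G`. -/
def HasUniqueMaxOpenPacking (G : SimpleGraph V) (U : Finset V) : Prop :=
  IsOpenPacking G ↑U ∧ U.card = openPackingNumber G ∧
    ∀ S : Finset V, IsOpenPacking G ↑S → S.card = openPackingNumber G → S = U

/-- A set of vertices is independent if no two of its vertices are adjacent. -/
def IsIndepVSet (G : SimpleGraph V) (S : Set V) : Prop :=
  S.Pairwise fun u v => ¬ G.Adj u v

/-- The independence number of a graph. -/
noncomputable def indepNumber (G : SimpleGraph V) : ℕ :=
  sSup {n | ∃ S : Finset V, IsIndepVSet G ↑S ∧ S.card = n}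

/-- A set of edges is a matching if the edges are pairwise disjoint. -/
def IsMatchingSet (G : SimpleGraph V) (M : Set (Sym2 V)) : Prop :=
  M ⊆ G.edgeSet ∧ M.Pairwise fun e f => ∀ v : V, v ∈ e → v ∉ f

/-- The matching number of a graph. -/
noncomputable def matchingNumber (G : SimpleGraph V) : ℕ :=
  sSup {n | ∃ M : Finset (Sym2 V), IsMatchingSet G ↑M ∧ M.card = n}

/-- The subdivision of `G`: each edge `e = uv` is replaced by a new vertex
`Sum.inr e` adjacent exactly to `u` and `v`. -/
def subdivisionGraph (G : SimpleGraph V) : SimpleGraph (V ⊕ G.edgeSet) :=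
  SimpleGraph.fromRel fun a b => match a, b with
    | Sum.inl u, Sum.inr e => u ∈ (e : Sym2 V)
    | _, _ => False

/-!
In `S(G)` the neighbourhood of an original vertex `u` consists of the subdivision vertices of the
edges at `u`, and that of a subdivision vertex `e` consists of the two ends of `e`; neighbourhoods
of vertices of different kinds never meet. Hence a vertex set of `S(G)` is an open packing exactly
when its original vertices form an independent set of `G` and its subdivision vertices form a
matching of `G`, and the two parts can be chosen independently.
-/

open Finset

section MaxCard

variable {α : Type*} [Finite α] (P : Finset α → Prop)

lemma bddAbove_setOf_card : BddAbove {n | ∃ S : Finset α, P S ∧ #S = n} := by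
  have := Fintype.ofFinite α
  exact ⟨Fintype.card α, by rintro n ⟨S, -, rfl⟩; exact S.card_le_univ⟩

lemma card_le_sSup_setOf_card {S : Finset α} (hS : P S) :
    #S ≤ sSup {n | ∃ S : Finset α, P S ∧ #S = n} :=
  le_csSup (bddAbove_setOf_card P) ⟨S, hS, rfl⟩

lemma exists_card_eq_sSup_setOf_card (h₀ : P ∅) :
    ∃ S : Finset α, P S ∧ #S = sSup {n | ∃ S : Finset α, P S ∧ #S = n} :=
  Nat.sSup_mem (s := {n | ∃ S : Finset α, P S ∧ #S = n}) ⟨0, ∅, h₀, card_empty⟩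
    (bddAbove_setOf_card P)

end MaxCard

section Subdivision

variable {G : SimpleGraph V}

@[simp]
lemma subdivisionGraph_adj_inl_inr {u : V} {e : G.edgeSet} :
    (subdivisionGraph G).Adj (.inl u) (.inr e) ↔ u ∈ (e : Sym2 V) := by
  simp [subdivisionGraph]

@[simp]
lemma subdivisionGraph_adj_inr_inl {e : G.edgeSet} {u : V} :
    (subdivisionGraph G).Adj (.inr e) (.inl u) ↔ u ∈ (e : Sym2 V) := by
  simp [subdivisionGraph]

@[simp]
lemma subdivisionGraph_not_adj_inl_inl {u v : V} :
    ¬ (subdivisionGraph G).Adj (.inl u) (.inl v) := by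
  simp [subdivisionGraph]

@[simp]
lemma subdivisionGraph_not_adj_inr_inr {e f : G.edgeSet} :
    ¬ (subdivisionGraph G).Adj (.inr e) (.inr f) := by
  simp [subdivisionGraph]

lemma subdivisionGraph_disjoint_neighborSet_inl_inl {u v : V} (huv : u ≠ v) :
    Disjoint ((subdivisionGraph G).neighborSet (.inl u))
      ((subdivisionGraph G).neighborSet (.inl v)) ↔ ¬ G.Adj u v := by
  refine ⟨fun h hadj => h.ne_of_mem (a := .inr ⟨s(u, v), hadj⟩) (by simp) (by simp) rfl,
    fun hnadj => Set.disjoint_left.mpr ?_⟩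
  rintro (w | e) hu hv
  · simp at hu
  · simp only [SimpleGraph.mem_neighborSet, subdivisionGraph_adj_inl_inr] at hu hv
    have he : (e : Sym2 V) = s(u, v) := (Sym2.mem_and_mem_iff huv).mp ⟨hu, hv⟩
    exact hnadj (by simpa [he] using e.2)

lemma subdivisionGraph_disjoint_neighborSet_inr_inr {e f : G.edgeSet} :
    Disjoint ((subdivisionGraph G).neighborSet (.inr e))
      ((subdivisionGraph G).neighborSet (.inr f)) ↔
      ∀ v ∈ (e : Sym2 V), v ∉ (f : Sym2 V) := by
  rw [Set.disjoint_left]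
  refine ⟨fun h v hve hvf => h (a := .inl v) (by simpa) (by simpa), ?_⟩
  rintro h (w | g) he hf
  · simp only [SimpleGraph.mem_neighborSet, subdivisionGraph_adj_inr_inl] at he hf
    exact h w he hf
  · simp at he

lemma subdivisionGraph_disjoint_neighborSet_inl_inr (u : V) (e : G.edgeSet) :
    Disjoint ((subdivisionGraph G).neighborSet (.inl u))
      ((subdivisionGraph G).neighborSet (.inr e)) := by
  rw [Set.disjoint_left]
  rintro (w | g) hu he <;> simp at hu he

lemma isOpenPacking_subdivisionGraph_iff {S : Finset (V ⊕ G.edgeSet)} :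
    IsOpenPacking (subdivisionGraph G) ↑S ↔
      IsIndepVSet G ↑S.toLeft ∧ IsMatchingSet G ↑(S.toRight.map (.subtype _)) := by
  simp only [coe_map, Function.Embedding.coe_subtype]
  constructor
  · intro hS
    refine ⟨fun u hu v hv huv => ?_, ?_, ?_⟩
    · exact (subdivisionGraph_disjoint_neighborSet_inl_inl huv).mp
        (hS (mem_toLeft.mp hu) (mem_toLeft.mp hv) (Sum.inl_injective.ne huv))
    · rintro _ ⟨e, -, rfl⟩
      exact e.2
    · rintro _ ⟨e, he, rfl⟩ _ ⟨f, hf, rfl⟩ hef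
      exact subdivisionGraph_disjoint_neighborSet_inr_inr.mp
        (hS (mem_toRight.mp he) (mem_toRight.mp hf)
          (Sum.inr_injective.ne (Subtype.val_injective.ne_iff.mp hef)))
  · rintro ⟨hI, -, hM⟩ (u | e) hx (v | f) hy hxy
    · have huv : u ≠ v := fun h => hxy (congrArg _ h)
      exact (subdivisionGraph_disjoint_neighborSet_inl_inl huv).mpr
        (hI (mem_toLeft.mpr hx) (mem_toLeft.mpr hy) huv)
    · exact subdivisionGraph_disjoint_neighborSet_inl_inr u f
    · exact (subdivisionGraph_disjoint_neighborSet_inl_inr v e).symm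
    · have hef : (e : Sym2 V) ≠ f := fun h => hxy (congrArg _ (Subtype.ext h))
      exact subdivisionGraph_disjoint_neighborSet_inr_inr.mpr
        (hM ⟨e, mem_toRight.mpr hx, rfl⟩ ⟨f, mem_toRight.mpr hy, rfl⟩ hef)

lemma exists_isOpenPacking_subdivisionGraph_card_eq {I : Finset V} {M : Finset (Sym2 V)}
    (hI : IsIndepVSet G ↑I) (hM : IsMatchingSet G ↑M) :
    ∃ S : Finset (V ⊕ G.edgeSet), IsOpenPacking (subdivisionGraph G) ↑S ∧ #S = #I + #M := by
  classical
  have hM_edges : M.filter (· ∈ G.edgeSet) = M := filter_true_of_mem fun e he => hM.1 he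
  refine ⟨I.disjSum (M.subtype (· ∈ G.edgeSet)), ?_, ?_⟩
  · rw [isOpenPacking_subdivisionGraph_iff, toLeft_disjSum, toRight_disjSum, subtype_map,
      hM_edges]
    exact ⟨hI, hM⟩
  · rw [card_disjSum, card_subtype, hM_edges]

end Subdivision

theorem stmt_10_general [Fintype V] (G : SimpleGraph V) :
    openPackingNumber (subdivisionGraph G) = indepNumber G + matchingNumber G := by
  apply le_antisymm
  · obtain ⟨S, hS, hcard⟩ := exists_card_eq_sSup_setOf_card
      (fun S : Finset (V ⊕ G.edgeSet) => IsOpenPacking (subdivisionGraph G) ↑S)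
      (by simp [IsOpenPacking])
    obtain ⟨hindep, hmatch⟩ := isOpenPacking_subdivisionGraph_iff.mp hS
    calc openPackingNumber (subdivisionGraph G)
      _ = #S.toLeft + #(S.toRight.map (.subtype _)) := by
          rw [openPackingNumber, ← hcard, card_map, card_toLeft_add_card_toRight]
      _ ≤ indepNumber G + matchingNumber G :=
          add_le_add (card_le_sSup_setOf_card _ hindep) (card_le_sSup_setOf_card _ hmatch)
  · obtain ⟨I, hI, hIcard⟩ := exists_card_eq_sSup_setOf_card
      (fun I : Finset V => IsIndepVSet G ↑I) (by simp [IsIndepVSet])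
    obtain ⟨M, hM, hMcard⟩ := exists_card_eq_sSup_setOf_card
      (fun M : Finset (Sym2 V) => IsMatchingSet G ↑M) (by simp [IsMatchingSet])
    obtain ⟨S, hS, hcard⟩ := exists_isOpenPacking_subdivisionGraph_card_eq hI hM
    calc indepNumber G + matchingNumber G = #S := by
          rw [indepNumber, matchingNumber, ← hIcard, ← hMcard, hcard]
      _ ≤ openPackingNumber (subdivisionGraph G) := card_le_sSup_setOf_card _ hS

theorem stmt_10 [Fintype V] [DecidableEq V] (G : SimpleGraph V) [DecidableRel G.Adj] :
    openPackingNumber (subdivisionGraph G) = indepNumber G + matchingNumber G :=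
  stmt_10_general G
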